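/- arXiv:2107.07593 — 2 statements merged into one kernel-verified Lean document; each statement's English description precedes it below -/
import Mathlib

section
/- Well-posedness (stability) of Bayesian filtering (Theorem 3.5): For every R > 0 there exists a constant C > 0, depending only on R, the noise density ρ and its constants, N, B, m₁, T and the norms ‖L_j‖_{L²(μ_prior)}, such that for all measurement vectors y, y' ∈ (ℝ^d)^N with |y|_Γ ≤ R and |y'|_Γ ≤ R one has: (i) W1(ν^y_t, ν^{y'}_t) ≤ C |y − y'|_Γ for every t ∈ [0,T]; and (ii) ∫₀ᵀ W1(ν^y_t, ν^{y'}_t) dt ≤ C·T·|y − y'|_Γ. -/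
open MeasureTheory
open scoped BigOperators ENNReal Matrix

noncomputable section

/-- The Γ-weighted norm `|y|_Γ = sqrt ⟨y, Γ⁻¹ y⟩` on `ℝ^d`. -/
def gammaNorm {d : ℕ} (Γ : Matrix (Fin d) (Fin d) ℝ) (y : Fin d → ℝ) : ℝ :=
  Real.sqrt (y ⬝ᵥ (Γ⁻¹).mulVec y)

/-- The Γ-norm of a tuple of measurements: `(Σ_k |y_k|_Γ²)^{1/2}`. -/
def gammaNormTuple {d N : ℕ} (Γ : Matrix (Fin d) (Fin d) ℝ) (y : Fin N → Fin d → ℝ) : ℝ :=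
  Real.sqrt (∑ k, (gammaNorm Γ (y k)) ^ 2)

/-- A noise density satisfying (N.1)–(N.3). -/
structure IsNoiseDensity {d : ℕ} (Γ : Matrix (Fin d) (Fin d) ℝ) (ρ : (Fin d → ℝ) → ℝ)
    (Lρ Cb Ct : ℝ) : Prop where
  Lρ_pos : 0 < Lρ
  Cb_pos : 0 < Cb
  Ct_pos : 0 < Ct
  pos : ∀ y, 0 < ρ y
  lip : ∀ y y', |ρ y - ρ y'| ≤ Lρ * gammaNorm Γ (y - y')
  bdd : ∀ y, ρ y ≤ Cb
  tail : ∀ y, Ct⁻¹ * Real.exp (-(1 / 2) * (gammaNorm Γ y) ^ 2) ≤ ρ y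

/-- Wasserstein-1 distance in Kantorovich–Rubinstein dual form. -/
def W1 {X : Type*} [NormedAddCommGroup X] [MeasurableSpace X] (μ ν : Measure X) : ℝ :=
  sSup {r : ℝ | ∃ Φ : X → ℝ, LipschitzWith 1 Φ ∧ Φ 0 = 0 ∧
    r = (∫ u, Φ u ∂μ) - ∫ u, Φ u ∂ν}

/-- Unnormalized posterior density given the first `k` measurements. -/
def postDensity {X : Type*} {d N : ℕ} (ρ : (Fin d → ℝ) → ℝ)
    (L : Fin N → X → Fin d → ℝ) (y : Fin N → Fin d → ℝ) (k : ℕ) (u : X) : ℝ :=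
  ∏ j ∈ Finset.univ.filter (fun j : Fin N => (j : ℕ) < k), ρ (y j - L j u)

/-- Normalization constant `Z_k(y_{1:k})`. -/
def postZ {X : Type*} [MeasurableSpace X] {d N : ℕ} (μp : Measure X) (ρ : (Fin d → ℝ) → ℝ)
    (L : Fin N → X → Fin d → ℝ) (y : Fin N → Fin d → ℝ) (k : ℕ) : ℝ :=
  ∫ u, postDensity ρ L y k u ∂μp

/-- Bayesian posterior `μ^{y_{1:k}}` on the initial data. -/
def posteriorK {X : Type*} [MeasurableSpace X] {d N : ℕ} (μp : Measure X)
    (ρ : (Fin d → ℝ) → ℝ) (L : Fin N → X → Fin d → ℝ) (y : Fin N → Fin d → ℝ) (k : ℕ) :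
    Measure X :=
  μp.withDensity fun u => ENNReal.ofReal (postDensity ρ L y k u / postZ μp ρ L y k)

/-- The number of measurement times `t_j` (j = 1, …, N) with `t_j ≤ t`; for
`t ∈ [t_k, t_{k+1})` this equals `k`, and it equals `N` for `t = t_N = T`. -/
def numObs {N : ℕ} (ts : Fin (N + 1) → ℝ) (t : ℝ) : ℕ :=
  (Finset.univ.filter (fun j : Fin N => ts j.succ ≤ t)).card

/-- The filtering distribution `ν^y_t = (S_t)_# μ^{y_{1:k}}` for `t ∈ [t_k, t_{k+1})`. -/
def filteringDist {X : Type*} [MeasurableSpace X] {d N : ℕ} (μp : Measure X)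
    (ρ : (Fin d → ℝ) → ℝ) (ts : Fin (N + 1) → ℝ) (S : ℝ → X → X)
    (L : Fin N → X → Fin d → ℝ) (y : Fin N → Fin d → ℝ) (t : ℝ) : Measure X :=
  (posteriorK μp ρ L y (numObs ts t)).map (S t)

/-!
The unnormalised posterior density is a product of at most `N` factors `ρ(y_j - L_j u)`, each
bounded by `max 1 C_b` and Lipschitz in `y_j`, so it is bounded and Lipschitz in `y`, uniformly
in `u`. By (N.3) and `|a - b|² ≤ 2|a|² + 2|b|²`, each factor is at least
`c exp(-|y_j|² - |L_j u|²)` with `c = min 1 C_t⁻¹ ≤ 1`, so the density is at least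
`c^N exp(-|y|²) exp(-Σ_j |L_j u|²)`, whose integral is positive. Hence the normalising constants
are bounded away from zero on `|y|_Γ ≤ R`, and the normalised densities are Lipschitz in `y`.
Testing the push-forwards by `S_t` against a 1-Lipschitz `Φ` with `Φ 0 = 0`, for which
`|Φ(S_t u)| ≤ B‖u‖`, bounds `W1` by that Lipschitz constant times `B m₁ |y - y'|_Γ`.
-/
open Filter Topology

section GammaNorm

variable {d N : ℕ} {Γ : Matrix (Fin d) (Fin d) ℝ}

lemma gammaNorm_nonneg (v : Fin d → ℝ) : 0 ≤ gammaNorm Γ v :=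
  Real.sqrt_nonneg _

lemma continuous_gammaNorm (Γ : Matrix (Fin d) (Fin d) ℝ) : Continuous (gammaNorm Γ) :=
  Real.continuous_sqrt.comp <|
    continuous_id.dotProduct (continuous_const.matrix_mulVec continuous_id)

lemma sq_gammaNorm (hΓ : (Γ⁻¹).PosSemidef) (v : Fin d → ℝ) :
    gammaNorm Γ v ^ 2 = v ⬝ᵥ (Γ⁻¹).mulVec v :=
  Real.sq_sqrt (by simpa using hΓ.dotProduct_mulVec_nonneg v)

lemma gammaNorm_sub_sq_le (hΓ : (Γ⁻¹).PosSemidef) (a b : Fin d → ℝ) :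
    gammaNorm Γ (a - b) ^ 2 ≤ 2 * gammaNorm Γ a ^ 2 + 2 * gammaNorm Γ b ^ 2 := by
  have parallelogram : (a - b) ⬝ᵥ (Γ⁻¹).mulVec (a - b) + (a + b) ⬝ᵥ (Γ⁻¹).mulVec (a + b)
      = 2 * (a ⬝ᵥ (Γ⁻¹).mulVec a) + 2 * (b ⬝ᵥ (Γ⁻¹).mulVec b) := by
    simp only [Matrix.mulVec_sub, Matrix.mulVec_add, dotProduct_sub, dotProduct_add,
      sub_dotProduct, add_dotProduct]
    ring
  have hplus := sq_gammaNorm hΓ (a + b) ▸ sq_nonneg (gammaNorm Γ (a + b))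
  rw [sq_gammaNorm hΓ, sq_gammaNorm hΓ, sq_gammaNorm hΓ]
  linarith

lemma gammaNormTuple_nonneg (y : Fin N → Fin d → ℝ) : 0 ≤ gammaNormTuple Γ y :=
  Real.sqrt_nonneg _

lemma sq_gammaNormTuple (y : Fin N → Fin d → ℝ) :
    gammaNormTuple Γ y ^ 2 = ∑ k, gammaNorm Γ (y k) ^ 2 :=
  Real.sq_sqrt (Finset.sum_nonneg fun _ _ => sq_nonneg _)

lemma gammaNorm_le_gammaNormTuple (y : Fin N → Fin d → ℝ) (j : Fin N) :
    gammaNorm Γ (y j) ≤ gammaNormTuple Γ y :=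
  (Real.le_sqrt (gammaNorm_nonneg _) (Finset.sum_nonneg fun _ _ => sq_nonneg _)).2 <|
    Finset.single_le_sum (f := fun k => gammaNorm Γ (y k) ^ 2) (fun _ _ => sq_nonneg _)
      (Finset.mem_univ j)

end GammaNorm

section NoiseDensity

variable {d : ℕ} {Γ : Matrix (Fin d) (Fin d) ℝ} {ρ : (Fin d → ℝ) → ℝ} {Lρ Cb Ct : ℝ}

lemma IsNoiseDensity.continuous (hρ : IsNoiseDensity Γ ρ Lρ Cb Ct) : Continuous ρ := by
  refine continuous_iff_continuousAt.2 fun y₀ => tendsto_iff_dist_tendsto_zero.2 ?_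
  have hcont : Continuous fun y => Lρ * gammaNorm Γ (y - y₀) :=
    continuous_const.mul ((continuous_gammaNorm Γ).comp (continuous_sub_right y₀))
  have hlim : Tendsto (fun y => Lρ * gammaNorm Γ (y - y₀)) (𝓝 y₀) (𝓝 0) :=
    hcont.tendsto' y₀ 0 (by simp [gammaNorm])
  exact squeeze_zero (fun _ => dist_nonneg) (fun y => hρ.lip y y₀) hlim

lemma IsNoiseDensity.le_max_one (hρ : IsNoiseDensity Γ ρ Lρ Cb Ct) (y : Fin d → ℝ) :
    ρ y ≤ max 1 Cb :=
  (hρ.bdd y).trans (le_max_right _ _)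

lemma IsNoiseDensity.min_one_inv_mul_exp_le (hρ : IsNoiseDensity Γ ρ Lρ Cb Ct)
    (hΓ : (Γ⁻¹).PosSemidef) (a b : Fin d → ℝ) :
    min 1 Ct⁻¹ * Real.exp (-(gammaNorm Γ a ^ 2 + gammaNorm Γ b ^ 2)) ≤ ρ (a - b) := by
  refine le_trans ?_ (hρ.tail (a - b))
  have hexp : -(gammaNorm Γ a ^ 2 + gammaNorm Γ b ^ 2) ≤ -(1 / 2) * gammaNorm Γ (a - b) ^ 2 := by
    linarith [gammaNorm_sub_sq_le hΓ a b]
  gcongr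
  · exact (inv_pos.2 hρ.Ct_pos).le
  · exact min_le_right _ _

end NoiseDensity

lemma abs_prod_sub_prod_le {ι : Type*} (s : Finset ι) {a b : ι → ℝ} {P : ℝ} (hP : 1 ≤ P)
    (ha0 : ∀ i, 0 ≤ a i) (haP : ∀ i, a i ≤ P) (hb0 : ∀ i, 0 ≤ b i) (hbP : ∀ i, b i ≤ P) :
    |∏ i ∈ s, a i - ∏ i ∈ s, b i| ≤ P ^ s.card * ∑ i ∈ s, |a i - b i| := by
  classical
  induction s using Finset.induction_on with
  | empty => simp
  | @insert i s hi ih =>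
    have hprod_b : ∏ j ∈ s, b j ≤ P ^ s.card :=
      (Finset.prod_le_prod (fun j _ => hb0 j) fun j _ => hbP j).trans_eq (Finset.prod_const P)
    rw [Finset.prod_insert hi, Finset.prod_insert hi, Finset.sum_insert hi,
      Finset.card_insert_of_notMem hi, pow_succ]
    calc |a i * ∏ j ∈ s, a j - b i * ∏ j ∈ s, b j|
        = |a i * (∏ j ∈ s, a j - ∏ j ∈ s, b j) + (a i - b i) * ∏ j ∈ s, b j| := by ring_nf
      _ ≤ a i * |∏ j ∈ s, a j - ∏ j ∈ s, b j| + |a i - b i| * ∏ j ∈ s, b j := by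
        grw [abs_add_le, abs_mul, abs_mul, abs_of_nonneg (ha0 i),
          abs_of_nonneg (Finset.prod_nonneg fun j _ => hb0 j)]
      _ ≤ P * (P ^ s.card * ∑ j ∈ s, |a j - b j|) + |a i - b i| * P ^ s.card := by
        gcongr
        exact haP i
      _ ≤ P ^ s.card * P * (|a i - b i| + ∑ j ∈ s, |a j - b j|) := by
        nlinarith [mul_nonneg (mul_nonneg (pow_nonneg (zero_le_one.trans hP) s.card)
          (abs_nonneg (a i - b i))) (sub_nonneg.2 hP)]

section Posterior

variable {X : Type*} {d N : ℕ} {Γ : Matrix (Fin d) (Fin d) ℝ} {ρ : (Fin d → ℝ) → ℝ}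
  {Lρ Cb Ct : ℝ} {L : Fin N → X → Fin d → ℝ}

lemma card_filter_lt_le (k : ℕ) : (Finset.univ.filter fun j : Fin N => (j : ℕ) < k).card ≤ N :=
  (Finset.card_filter_le _ _).trans_eq (Finset.card_fin N)

lemma postDensity_pos (hρ : IsNoiseDensity Γ ρ Lρ Cb Ct) (y : Fin N → Fin d → ℝ) (k : ℕ)
    (u : X) : 0 < postDensity ρ L y k u :=
  Finset.prod_pos fun _ _ => hρ.pos _

lemma postDensity_le (hρ : IsNoiseDensity Γ ρ Lρ Cb Ct) (y : Fin N → Fin d → ℝ) (k : ℕ)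
    (u : X) : postDensity ρ L y k u ≤ max 1 Cb ^ N :=
  calc postDensity ρ L y k u
      ≤ max 1 Cb ^ (Finset.univ.filter fun j : Fin N => (j : ℕ) < k).card :=
        (Finset.prod_le_prod (fun _ _ => (hρ.pos _).le) fun _ _ => hρ.le_max_one _).trans_eq
          (Finset.prod_const _)
    _ ≤ max 1 Cb ^ N := pow_le_pow_right₀ (le_max_left _ _) (card_filter_lt_le k)

lemma abs_postDensity_sub_le (hρ : IsNoiseDensity Γ ρ Lρ Cb Ct) (y y' : Fin N → Fin d → ℝ)
    (k : ℕ) (u : X) :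
    |postDensity ρ L y k u - postDensity ρ L y' k u|
      ≤ max 1 Cb ^ N * (N * Lρ) * gammaNormTuple Γ (y - y') := by
  set s := Finset.univ.filter fun j : Fin N => (j : ℕ) < k
  have hfactor : ∀ j, |ρ (y j - L j u) - ρ (y' j - L j u)| ≤ Lρ * gammaNormTuple Γ (y - y') :=
    fun j => calc
      |ρ (y j - L j u) - ρ (y' j - L j u)| ≤ Lρ * gammaNorm Γ ((y - y') j) := by
        simpa using hρ.lip (y j - L j u) (y' j - L j u)
      _ ≤ Lρ * gammaNormTuple Γ (y - y') := by
        gcongr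
        exacts [hρ.Lρ_pos.le, gammaNorm_le_gammaNormTuple _ j]
  calc |postDensity ρ L y k u - postDensity ρ L y' k u|
      ≤ max 1 Cb ^ s.card * ∑ j ∈ s, |ρ (y j - L j u) - ρ (y' j - L j u)| :=
        abs_prod_sub_prod_le s (le_max_left _ _) (fun _ => (hρ.pos _).le)
          (fun _ => hρ.le_max_one _) (fun _ => (hρ.pos _).le) fun _ => hρ.le_max_one _
    _ ≤ max 1 Cb ^ N * (s.card * (Lρ * gammaNormTuple Γ (y - y'))) := by
        rw [← nsmul_eq_mul, ← Finset.sum_const]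
        gcongr with j
        · exact le_max_left _ _
        · exact card_filter_lt_le k
        · exact hfactor j
    _ ≤ max 1 Cb ^ N * (N * (Lρ * gammaNormTuple Γ (y - y'))) := by
        have hbound_nonneg := mul_nonneg hρ.Lρ_pos.le (gammaNormTuple_nonneg (Γ := Γ) (y - y'))
        gcongr
        exact_mod_cast card_filter_lt_le k
    _ = max 1 Cb ^ N * (N * Lρ) * gammaNormTuple Γ (y - y') := by ring

lemma min_one_inv_pow_mul_exp_le_postDensity (hρ : IsNoiseDensity Γ ρ Lρ Cb Ct)
    (hΓ : (Γ⁻¹).PosSemidef) (y : Fin N → Fin d → ℝ) (k : ℕ) (u : X) :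
    min 1 Ct⁻¹ ^ N * Real.exp (-(gammaNormTuple Γ y ^ 2 + ∑ j, gammaNorm Γ (L j u) ^ 2))
      ≤ postDensity ρ L y k u := by
  set c := min 1 Ct⁻¹
  have hc : 0 < c := lt_min one_pos (inv_pos.2 hρ.Ct_pos)
  set f := fun j : Fin N => c * Real.exp (-(gammaNorm Γ (y j) ^ 2 + gammaNorm Γ (L j u) ^ 2))
  have hf_le_one : ∀ j, f j ≤ 1 := fun j =>
    mul_le_one₀ (min_le_left _ _) (Real.exp_pos _).le
      (Real.exp_le_one_iff.2 (by simp only [neg_nonpos]; positivity))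
  have hlhs : c ^ N * Real.exp (-(gammaNormTuple Γ y ^ 2 + ∑ j, gammaNorm Γ (L j u) ^ 2))
      = ∏ j, f j := by
    rw [Finset.prod_mul_distrib, Finset.prod_const, Finset.card_univ, Fintype.card_fin,
      ← Real.exp_sum, Finset.sum_neg_distrib, Finset.sum_add_distrib, sq_gammaNormTuple]
  rw [hlhs]
  calc ∏ j, f j ≤ ∏ j ∈ Finset.univ.filter fun j : Fin N => (j : ℕ) < k, f j :=
        Finset.prod_le_prod_of_subset_of_le_one (Finset.filter_subset _ _)
          (fun j _ => by positivity) fun j _ _ => hf_le_one j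
    _ ≤ postDensity ρ L y k u :=
        Finset.prod_le_prod (fun j _ => by positivity)
          fun j _ => hρ.min_one_inv_mul_exp_le hΓ (y j) (L j u)

variable [MeasurableSpace X]

lemma measurable_postDensity (hρ : IsNoiseDensity Γ ρ Lρ Cb Ct) (hL : ∀ j, Measurable (L j))
    (y : Fin N → Fin d → ℝ) (k : ℕ) : Measurable (postDensity ρ L y k) :=
  Finset.measurable_prod _ fun j _ =>
    hρ.continuous.measurable.comp (measurable_const.sub (hL j))

lemma integrable_postDensity (hρ : IsNoiseDensity Γ ρ Lρ Cb Ct) (hL : ∀ j, Measurable (L j))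
    (μ : Measure X) [IsFiniteMeasure μ] (y : Fin N → Fin d → ℝ) (k : ℕ) :
    Integrable (postDensity ρ L y k) μ :=
  (integrable_const (max 1 Cb ^ N)).mono' (measurable_postDensity hρ hL y k).aestronglyMeasurable
    (ae_of_all _ fun u => by
      rw [Real.norm_of_nonneg (postDensity_pos hρ y k u).le]
      exact postDensity_le hρ y k u)

lemma abs_postZ_sub_le (hρ : IsNoiseDensity Γ ρ Lρ Cb Ct) (hL : ∀ j, Measurable (L j))
    (μ : Measure X) [IsProbabilityMeasure μ] (y y' : Fin N → Fin d → ℝ) (k : ℕ) :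
    |postZ μ ρ L y k - postZ μ ρ L y' k|
      ≤ max 1 Cb ^ N * (N * Lρ) * gammaNormTuple Γ (y - y') := by
  rw [postZ, postZ, ← integral_sub (integrable_postDensity hρ hL μ y k)
    (integrable_postDensity hρ hL μ y' k), ← Real.norm_eq_abs]
  simpa using norm_integral_le_of_norm_le_const (μ := μ)
    (ae_of_all _ fun u => (Real.norm_eq_abs _).trans_le (abs_postDensity_sub_le hρ y y' k u))

lemma exists_pos_le_postZ (hρ : IsNoiseDensity Γ ρ Lρ Cb Ct) (hΓ : (Γ⁻¹).PosSemidef)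
    (hL : ∀ j, Measurable (L j)) (μ : Measure X) [IsFiniteMeasure μ] [NeZero μ] (R : ℝ) :
    ∃ z > 0, ∀ y : Fin N → Fin d → ℝ, gammaNormTuple Γ y ≤ R → ∀ k, z ≤ postZ μ ρ L y k := by
  set G := fun u => ∑ j, gammaNorm Γ (L j u) ^ 2
  have hG : Measurable G := Finset.measurable_sum _ fun j _ =>
    ((continuous_gammaNorm Γ).measurable.comp (hL j)).pow_const 2
  have hexp : Integrable (fun u => Real.exp (-G u)) μ :=
    (integrable_const 1).mono' (Real.measurable_exp.comp hG.neg).aestronglyMeasurable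
      (ae_of_all _ fun u => by
        rw [Real.norm_of_nonneg (Real.exp_pos _).le, Real.exp_le_one_iff, neg_nonpos]
        positivity)
  have hc : 0 < min 1 Ct⁻¹ := lt_min one_pos (inv_pos.2 hρ.Ct_pos)
  refine ⟨min 1 Ct⁻¹ ^ N * Real.exp (-R ^ 2) * ∫ u, Real.exp (-G u) ∂μ,
    mul_pos (by positivity) (integral_exp_pos hexp), fun y hy k => ?_⟩
  rw [← integral_const_mul, postZ]
  refine integral_mono (hexp.const_mul _) (integrable_postDensity hρ hL μ y k) fun u => ?_
  calc min 1 Ct⁻¹ ^ N * Real.exp (-R ^ 2) * Real.exp (-G u)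
      ≤ min 1 Ct⁻¹ ^ N * Real.exp (-(gammaNormTuple Γ y ^ 2 + G u)) := by
        rw [mul_assoc, ← Real.exp_add]
        gcongr
        linarith [pow_le_pow_left₀ (gammaNormTuple_nonneg y) hy 2]
    _ ≤ postDensity ρ L y k u := min_one_inv_pow_mul_exp_le_postDensity hρ hΓ y k u

end Posterior

lemma abs_div_sub_div_le {p p' Z Z' z M : ℝ} (hz : 0 < z) (hZ : z ≤ Z) (hZ' : z ≤ Z')
    (hp' : |p'| ≤ M) :
    |p / Z - p' / Z'| ≤ |p - p'| / z + M * |Z - Z'| / z ^ 2 := by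
  have hZpos : 0 < Z := hz.trans_le hZ
  have hZ'pos : 0 < Z' := hz.trans_le hZ'
  have hsplit : p / Z - p' / Z' = (p - p') / Z + p' * (Z' - Z) / (Z * Z') := by
    field_simp
    ring
  rw [hsplit]
  calc |(p - p') / Z + p' * (Z' - Z) / (Z * Z')|
      ≤ |p - p'| / Z + |p'| * |Z - Z'| / (Z * Z') := by
        grw [abs_add_le, abs_div, abs_div, abs_mul, abs_sub_comm Z', abs_of_pos hZpos,
          abs_of_pos (mul_pos hZpos hZ'pos)]
    _ ≤ |p - p'| / z + M * |Z - Z'| / z ^ 2 := by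
        rw [sq]
        gcongr
        exact mul_nonneg ((abs_nonneg _).trans hp') (abs_nonneg _)

theorem exists_posteriorDensity_bounds {X : Type*} [MeasurableSpace X] {d N : ℕ}
    {Γ : Matrix (Fin d) (Fin d) ℝ} (hΓ : Γ.PosDef) {ρ : (Fin d → ℝ) → ℝ} {Lρ Cb Ct : ℝ}
    (hρ : IsNoiseDensity Γ ρ Lρ Cb Ct) {L : Fin N → X → Fin d → ℝ} (hL : ∀ j, Measurable (L j))
    (μ : Measure X) [IsProbabilityMeasure μ] (R : ℝ) :
    ∃ M K : ℝ, 0 ≤ K ∧ ∀ y y' : Fin N → Fin d → ℝ,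
      gammaNormTuple Γ y ≤ R → gammaNormTuple Γ y' ≤ R → ∀ k u,
        (0 ≤ postDensity ρ L y k u / postZ μ ρ L y k ∧
          postDensity ρ L y k u / postZ μ ρ L y k ≤ M) ∧
        |postDensity ρ L y k u / postZ μ ρ L y k - postDensity ρ L y' k u / postZ μ ρ L y' k|
          ≤ K * gammaNormTuple Γ (y - y') := by
  obtain ⟨z, hz, hZ⟩ := exists_pos_le_postZ hρ hΓ.inv.posSemidef hL μ R
  set P := max 1 Cb ^ N
  set A := P * (N * Lρ)
  have hP : 0 ≤ P := pow_nonneg (zero_le_one.trans (le_max_left _ _)) N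
  have hA : 0 ≤ A := mul_nonneg hP (mul_nonneg N.cast_nonneg hρ.Lρ_pos.le)
  refine ⟨P / z, A / z + P * A / z ^ 2, by positivity, fun y y' hy hy' k u => ⟨⟨?_, ?_⟩, ?_⟩⟩
  · exact div_nonneg (postDensity_pos hρ y k u).le (hz.trans_le (hZ y hy k)).le
  · exact div_le_div₀ hP (postDensity_le hρ y k u) hz (hZ y hy k)
  · have hp' : |postDensity ρ L y' k u| ≤ P := by
      rw [abs_of_pos (postDensity_pos hρ y' k u)]
      exact postDensity_le hρ y' k u
    calc _ ≤ |postDensity ρ L y k u - postDensity ρ L y' k u| / z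
            + P * |postZ μ ρ L y k - postZ μ ρ L y' k| / z ^ 2 :=
          abs_div_sub_div_le hz (hZ y hy k) (hZ y' hy' k) hp'
      _ ≤ A * gammaNormTuple Γ (y - y') / z + P * (A * gammaNormTuple Γ (y - y')) / z ^ 2 := by
          gcongr
          exacts [abs_postDensity_sub_le hρ y y' k u, abs_postZ_sub_le hρ hL μ y y' k]
      _ = (A / z + P * A / z ^ 2) * gammaNormTuple Γ (y - y') := by ring

lemma integral_map_withDensity_ofReal {X Y : Type*} [MeasurableSpace X] [MeasurableSpace Y]
    {μ : Measure X} {S : X → Y} (hS : Measurable S)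
    {f : X → ℝ} (hf : Measurable f) (hf0 : ∀ u, 0 ≤ f u) {Φ : Y → ℝ} (hΦ : Measurable Φ) :
    ∫ x, Φ x ∂(μ.withDensity fun u => ENNReal.ofReal (f u)).map S = ∫ u, f u * Φ (S u) ∂μ := by
  rw [integral_map hS.aemeasurable hΦ.aestronglyMeasurable,
    integral_withDensity_eq_integral_toReal_smul hf.ennreal_ofReal
      (ae_of_all _ fun _ => ENNReal.ofReal_lt_top)]
  simp only [ENNReal.toReal_ofReal (hf0 _), smul_eq_mul]

section Wasserstein

variable {X : Type*} [NormedAddCommGroup X] [MeasurableSpace X]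

lemma W1_le_of_forall_integral_sub_le {μ ν : Measure X} {c : ℝ} (hc : 0 ≤ c)
    (h : ∀ Φ : X → ℝ, LipschitzWith 1 Φ → Φ 0 = 0 → ∫ u, Φ u ∂μ - ∫ u, Φ u ∂ν ≤ c) :
    W1 μ ν ≤ c :=
  Real.sSup_le (by rintro _ ⟨Φ, hΦ, hΦ0, rfl⟩; exact h Φ hΦ hΦ0) hc

theorem W1_map_withDensity_le [BorelSpace X] {μ : Measure X} (hmom : Integrable (fun u => ‖u‖) μ)
    {S : X → X} (hS : Measurable S) {B : ℝ} (hB : 0 ≤ B) (hSB : ∀ u, ‖S u‖ ≤ B * ‖u‖)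
    {f g : X → ℝ} {M ε : ℝ} (hf : Measurable f) (hg : Measurable g)
    (hf0 : ∀ u, 0 ≤ f u) (hg0 : ∀ u, 0 ≤ g u) (hfM : ∀ u, f u ≤ M) (hgM : ∀ u, g u ≤ M)
    (hfg : ∀ u, |f u - g u| ≤ ε) :
    W1 ((μ.withDensity fun u => ENNReal.ofReal (f u)).map S)
        ((μ.withDensity fun u => ENNReal.ofReal (g u)).map S)
      ≤ ε * B * ∫ u, ‖u‖ ∂μ := by
  have hε : 0 ≤ ε := (abs_nonneg _).trans (hfg 0)
  refine W1_le_of_forall_integral_sub_le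
    (mul_nonneg (mul_nonneg hε hB) (integral_nonneg fun _ => norm_nonneg _)) fun Φ hΦ hΦ0 => ?_
  have hΦS : ∀ u, |Φ (S u)| ≤ B * ‖u‖ := fun u => by
    have h := hΦ.norm_le_mul hΦ0 (S u)
    rw [NNReal.coe_one, one_mul, Real.norm_eq_abs] at h
    exact h.trans (hSB u)
  have hint : ∀ h : X → ℝ, Measurable h → (∀ u, 0 ≤ h u) → (∀ u, h u ≤ M) →
      Integrable (fun u => h u * Φ (S u)) μ := fun h hh hh0 hhM =>
    (hmom.const_mul (M * B)).mono'
      (hh.mul (hΦ.continuous.measurable.comp hS)).aestronglyMeasurable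
      (ae_of_all _ fun u => by
        rw [Real.norm_eq_abs, abs_mul, abs_of_nonneg (hh0 u), mul_assoc]
        exact mul_le_mul (hhM u) (hΦS u) (abs_nonneg _) ((hh0 u).trans (hhM u)))
  rw [integral_map_withDensity_ofReal hS hf hf0 hΦ.continuous.measurable,
    integral_map_withDensity_ofReal hS hg hg0 hΦ.continuous.measurable,
    ← integral_sub (hint f hf hf0 hfM) (hint g hg hg0 hgM), ← integral_const_mul]
  refine integral_mono ((hint f hf hf0 hfM).sub (hint g hg hg0 hgM))
    (hmom.const_mul _) fun u => ?_
  calc f u * Φ (S u) - g u * Φ (S u) ≤ |f u - g u| * |Φ (S u)| := by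
        rw [← sub_mul, ← abs_mul]
        exact le_abs_self _
    _ ≤ ε * (B * ‖u‖) := mul_le_mul (hfg u) (hΦS u) (abs_nonneg _) hε
    _ = ε * B * ‖u‖ := by ring

end Wasserstein

lemma intervalIntegral_le_mul_sub_of_le {f : ℝ → ℝ} {a b c : ℝ} (hab : a ≤ b) (hc : 0 ≤ c)
    (hf : ∀ t ∈ Set.Icc a b, f t ≤ c) : ∫ t in a..b, f t ≤ c * (b - a) := by
  by_cases hint : IntervalIntegrable f volume a b
  · calc ∫ t in a..b, f t ≤ ∫ _ in a..b, c :=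
          intervalIntegral.integral_mono_on hab hint intervalIntegrable_const hf
      _ = c * (b - a) := by rw [intervalIntegral.integral_const, smul_eq_mul, mul_comm]
  · rw [intervalIntegral.integral_undef hint]
    exact mul_nonneg hc (sub_nonneg.2 hab)

theorem filtering_wellposedness_general
    {X : Type*} [NormedAddCommGroup X] [MeasurableSpace X] [BorelSpace X]
    {d N : ℕ}
    (Γ : Matrix (Fin d) (Fin d) ℝ) (hΓ : Γ.PosDef)
    (ρ : (Fin d → ℝ) → ℝ) (Lρ Cb Ct : ℝ) (hρ : IsNoiseDensity Γ ρ Lρ Cb Ct)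
    (μp : Measure X) [IsProbabilityMeasure μp]
    (hmom : Integrable (fun u => ‖u‖) μp)
    (T : ℝ) (hT : 0 < T)
    (ts : Fin (N + 1) → ℝ)
    (S : ℝ → X → X) (hSmeas : Measurable fun p : ℝ × X => S p.1 p.2)
    (B : ℝ) (hB : 0 < B)
    (hSbd : ∀ t ∈ Set.Icc (0 : ℝ) T, ∀ u : X, ‖S t u‖ ≤ B * ‖u‖)
    (L : Fin N → X → Fin d → ℝ) (hLmeas : ∀ j, Measurable (L j)) :
    ∀ R > 0, ∃ C > 0,
      ∀ y y' : Fin N → Fin d → ℝ,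
        gammaNormTuple Γ y ≤ R → gammaNormTuple Γ y' ≤ R →
        (∀ t ∈ Set.Icc (0 : ℝ) T,
          W1 (filteringDist μp ρ ts S L y t) (filteringDist μp ρ ts S L y' t)
            ≤ C * gammaNormTuple Γ (y - y')) ∧
        (∫ t in (0 : ℝ)..T,
            W1 (filteringDist μp ρ ts S L y t) (filteringDist μp ρ ts S L y' t))
          ≤ C * T * gammaNormTuple Γ (y - y') := by
  intro R _
  obtain ⟨M, K, hK, hdens⟩ := exists_posteriorDensity_bounds hΓ hρ hLmeas μp R
  set m₁ := ∫ u, ‖u‖ ∂μp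
  have hm₁ : 0 ≤ m₁ := integral_nonneg fun _ => norm_nonneg _
  refine ⟨B * K * m₁ + 1, by positivity, fun y y' hy hy' => ?_⟩
  have hdist := gammaNormTuple_nonneg (Γ := Γ) (y - y')
  have hpointwise : ∀ t ∈ Set.Icc (0 : ℝ) T,
      W1 (filteringDist μp ρ ts S L y t) (filteringDist μp ρ ts S L y' t)
        ≤ (B * K * m₁ + 1) * gammaNormTuple Γ (y - y') := fun t ht =>
    calc W1 (filteringDist μp ρ ts S L y t) (filteringDist μp ρ ts S L y' t)
        ≤ K * gammaNormTuple Γ (y - y') * B * m₁ :=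
          W1_map_withDensity_le hmom (hSmeas.comp measurable_prodMk_left) hB.le (hSbd t ht)
            ((measurable_postDensity hρ hLmeas y _).div_const _)
            ((measurable_postDensity hρ hLmeas y' _).div_const _)
            (fun u => (hdens y y' hy hy' _ u).1.1) (fun u => (hdens y' y hy' hy _ u).1.1)
            (fun u => (hdens y y' hy hy' _ u).1.2) (fun u => (hdens y' y hy' hy _ u).1.2)
            (fun u => (hdens y y' hy hy' _ u).2)
      _ ≤ (B * K * m₁ + 1) * gammaNormTuple Γ (y - y') := by nlinarith
  exact ⟨hpointwise, (intervalIntegral_le_mul_sub_of_le hT.le (by positivity) hpointwise).trans_eq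
    (by ring)⟩

/-- **Theorem 3.5 (well-posedness / stability of Bayesian filtering).** -/
theorem filtering_wellposedness
    {X : Type*} [NormedAddCommGroup X] [NormedSpace ℝ X] [CompleteSpace X]
    [TopologicalSpace.SeparableSpace X] [MeasurableSpace X] [BorelSpace X]
    {d N : ℕ} (hN : 0 < N)
    (Γ : Matrix (Fin d) (Fin d) ℝ) (hΓ : Γ.PosDef)
    (ρ : (Fin d → ℝ) → ℝ) (Lρ Cb Ct : ℝ) (hρ : IsNoiseDensity Γ ρ Lρ Cb Ct)
    (μp : Measure X) [IsProbabilityMeasure μp]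
    (hmom : Integrable (fun u => ‖u‖) μp)
    (T : ℝ) (hT : 0 < T)
    (ts : Fin (N + 1) → ℝ) (hts : StrictMono ts)
    (hts0 : ts 0 = 0) (htsN : ts (Fin.last N) = T)
    (S : ℝ → X → X) (hSmeas : Measurable fun p : ℝ × X => S p.1 p.2)
    (B : ℝ) (hB : 0 < B)
    (hSbd : ∀ t ∈ Set.Icc (0 : ℝ) T, ∀ u : X, ‖S t u‖ ≤ B * ‖u‖)
    (L : Fin N → X → Fin d → ℝ) (hLmeas : ∀ j, Measurable (L j))
    (hL2 : ∀ j, Integrable (fun u => (gammaNorm Γ (L j u)) ^ 2) μp) :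
    ∀ R > 0, ∃ C > 0,
      ∀ y y' : Fin N → Fin d → ℝ,
        gammaNormTuple Γ y ≤ R → gammaNormTuple Γ y' ≤ R →
        (∀ t ∈ Set.Icc (0 : ℝ) T,
          W1 (filteringDist μp ρ ts S L y t) (filteringDist μp ρ ts S L y' t)
            ≤ C * gammaNormTuple Γ (y - y')) ∧
        (∫ t in (0 : ℝ)..T,
            W1 (filteringDist μp ρ ts S L y t) (filteringDist μp ρ ts S L y' t))
          ≤ C * T * gammaNormTuple Γ (y - y') :=
  filtering_wellposedness_general Γ hΓ ρ Lρ Cb Ct hρ μp hmom T hT ts S hSmeas B hB hSbd L hLmeas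
end
end

section
/- Recursive filtering equals push-forward of the Bayesian posterior (Proposition 3.3): Let X be a separable Banach space and S : [0,∞) × X → X Borel measurable with the semigroup property S_s(S_t(ū)) = S_{s+t}(ū) for all s, t ≥ 0 and ū ∈ X. Let μ_prior be a Borel probability measure on X, let 0 = t_0 < t_1 < ⋯ < t_N, and let Φ̃_1, …, Φ̃_N : X → ℝ be Borel measurable functions, each bounded below. Set Φ_j(ū) := Φ̃_j(S_{t_{j−1}}(ū)) and define the Bayesian posteriors μ^{(0)} := μ_prior and μ^{(j)} := Z_j⁻¹ exp(−Σ_{k=1}^{j} Φ_k) · μ_prior, where Z_j := ∫_X exp(−Σ_{k=1}^{j} Φ_k(ū)) dμ_prior(ū) (which is finite and strictly positive). Define recursively ν̃_0 := (S_0)_# μ_prior and, for j = 1, …, N, the correction step ν̃'_j := z_j⁻¹ exp(−Φ̃_j) · ν̃_{j−1} with z_j := ∫_X exp(−Φ̃_j) dν̃_{j−1}, followed by the prediction step ν̃_j := (S_{t_j − t_{j−1}})_# ν̃'_j. Then ν̃_j = (S_{t_j})_# μ^{(j)} for every j = 0, 1, …, N. -/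
open MeasureTheory
open scoped BigOperators ENNReal

noncomputable section

/-- The accumulated log-likelihood `Σ_{k=1}^{j} Φ_k(ū)` with
`Φ_k(ū) = Φ̃_k(S_{t_{k−1}}(ū))`. -/
def recPhiSum {X : Type*} (S : ℝ → X → X) (t : ℕ → ℝ) (Φt : ℕ → X → ℝ)
    (j : ℕ) (u : X) : ℝ :=
  ∑ k ∈ Finset.range j, Φt (k + 1) (S (t k) u)

/-- The normalization constant `Z_j`. -/
def recZ {X : Type*} [MeasurableSpace X] (μp : Measure X) (S : ℝ → X → X)
    (t : ℕ → ℝ) (Φt : ℕ → X → ℝ) (j : ℕ) : ℝ :=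
  ∫ u, Real.exp (-recPhiSum S t Φt j u) ∂μp

/-- The Bayesian posterior `μ^{(j)} = Z_j⁻¹ exp(−Σ_{k=1}^{j} Φ_k) · μ_prior`. -/
def recPosterior {X : Type*} [MeasurableSpace X] (μp : Measure X) (S : ℝ → X → X)
    (t : ℕ → ℝ) (Φt : ℕ → X → ℝ) (j : ℕ) : Measure X :=
  μp.withDensity fun u =>
    ENNReal.ofReal (Real.exp (-recPhiSum S t Φt j u) / recZ μp S t Φt j)

/-- The recursively defined filtering measures: `ν̃_0 = (S_0)_# μ_prior`, and
`ν̃_{j+1}` is obtained by the correction step (reweighting by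
`z⁻¹ exp(−Φ̃_{j+1})`) followed by the prediction step (push-forward by
`S_{t_{j+1} − t_j}`). -/
def recFilter {X : Type*} [MeasurableSpace X] (μp : Measure X) (S : ℝ → X → X)
    (t : ℕ → ℝ) (Φt : ℕ → X → ℝ) : ℕ → Measure X
  | 0 => μp.map (S 0)
  | j + 1 =>
    ((recFilter μp S t Φt j).withDensity fun u =>
        ENNReal.ofReal (Real.exp (-Φt (j + 1) u) /
          ∫ v, Real.exp (-Φt (j + 1) v) ∂(recFilter μp S t Φt j))).map
      (S (t (j + 1) - t j))

/-! The posterior `μ^{(j)}` and each correction step are exponential tiltings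
(`Measure.tilted`). Tilting commutes with push-forward, `(T_# μ).tilted f = T_# (μ.tilted (f ∘ T))`,
and tilting twice adds the exponents, so by induction on `j` the correction step turns
`(S_{t_j})_# μ^{(j)}` into `(S_{t_j})_# μ^{(j+1)}`; the prediction step then pushes it forward by
`S_{t_{j+1} - t_j}`, and `S_{t_{j+1} - t_j} ∘ S_{t_j} = S_{t_{j+1}}` by the semigroup property. -/

open Real

namespace MeasureTheory

variable {α β : Type*} [MeasurableSpace α] [MeasurableSpace β]

theorem Measure.map_withDensity_comp (μ : Measure α) {T : α → β} (hT : Measurable T)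
    {g : β → ℝ≥0∞} (hg : Measurable g) :
    (μ.withDensity (g ∘ T)).map T = (μ.map T).withDensity g := by
  ext s hs
  rw [withDensity_apply _ hs, Measure.map_apply hT hs,
    withDensity_apply _ (hT hs), setLIntegral_map hs hg hT, Function.comp_def]

theorem Measure.tilted_map (μ : Measure α) {T : α → β} (hT : Measurable T)
    {f : β → ℝ} (hf : Measurable f) :
    (μ.map T).tilted f = (μ.tilted fun x => f (T x)).map T := by
  have hdens : Measurable fun y => ENNReal.ofReal (exp (f y) / ∫ x, exp (f (T x)) ∂μ) := by
    fun_prop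
  rw [Measure.tilted, Measure.tilted,
    integral_map hT.aemeasurable hf.exp.aestronglyMeasurable,
    ← Measure.map_withDensity_comp μ hT hdens]
  rfl

theorem integrable_exp_neg_of_bddBelow {μ : Measure α} [IsFiniteMeasure μ] {f : α → ℝ}
    (hf : AEStronglyMeasurable f μ) (hb : BddBelow (Set.range f)) :
    Integrable (fun x => exp (-f x)) μ := by
  obtain ⟨m, hm⟩ := hb
  refine .of_bound (continuous_exp.comp_aestronglyMeasurable hf.neg) (exp (-m)) ?_
  filter_upwards with x
  rw [norm_of_nonneg (exp_pos _).le, exp_le_exp, neg_le_neg_iff]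
  exact hm (Set.mem_range_self x)

end MeasureTheory

section Filtering

variable {X : Type*} (S : ℝ → X → X) (t : ℕ → ℝ) (Φt : ℕ → X → ℝ)

theorem recPhiSum_zero : recPhiSum S t Φt 0 = 0 := by
  funext u
  exact Finset.sum_range_zero _

theorem recPhiSum_succ (j : ℕ) (u : X) :
    recPhiSum S t Φt (j + 1) u = recPhiSum S t Φt j u + Φt (j + 1) (S (t j) u) :=
  Finset.sum_range_succ _ _

theorem bddBelow_range_recPhiSum {j : ℕ} (hΦ : ∀ k < j, BddBelow (Set.range (Φt (k + 1)))) :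
    BddBelow (Set.range (recPhiSum S t Φt j)) := by
  induction j with
  | zero => exact ⟨0, Set.forall_mem_range.2 fun u => (congrFun (recPhiSum_zero S t Φt) u).ge⟩
  | succ j ih =>
    obtain ⟨b, hb⟩ := ih fun k hk => hΦ k (by omega)
    obtain ⟨m, hm⟩ := hΦ j (by omega)
    refine ⟨b + m, Set.forall_mem_range.2 fun u => ?_⟩
    rw [recPhiSum_succ]
    exact add_le_add (hb (Set.mem_range_self u)) (hm (Set.mem_range_self _))

theorem comp_sub_eq_of_semigroup
    (hsemi : ∀ s ≥ (0 : ℝ), ∀ τ ≥ (0 : ℝ), ∀ u : X, S s (S τ u) = S (s + τ) u) {a b : ℝ}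
    (ha : 0 ≤ a) (hab : a ≤ b) : S (b - a) ∘ S a = S b := by
  funext u
  rw [Function.comp_apply, hsemi _ (sub_nonneg.2 hab) _ ha, sub_add_cancel]

variable [MeasurableSpace X] (μp : Measure X)

theorem measurable_recPhiSum (hS : ∀ c, Measurable (S c)) {j : ℕ}
    (hΦ : ∀ k < j, Measurable (Φt (k + 1))) : Measurable (recPhiSum S t Φt j) :=
  Finset.measurable_sum _ fun k hk => (hΦ k (Finset.mem_range.1 hk)).comp (hS _)

theorem recPosterior_eq_tilted (j : ℕ) :
    recPosterior μp S t Φt j = μp.tilted fun u => -recPhiSum S t Φt j u :=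
  rfl

theorem recPosterior_zero [IsProbabilityMeasure μp] : recPosterior μp S t Φt 0 = μp := by
  simp [recPosterior_eq_tilted, recPhiSum_zero]

theorem recPosterior_succ {j : ℕ}
    (hint : Integrable (fun u => exp (-recPhiSum S t Φt j u)) μp) :
    recPosterior μp S t Φt (j + 1) =
      (recPosterior μp S t Φt j).tilted fun u => -Φt (j + 1) (S (t j) u) := by
  rw [recPosterior_eq_tilted, recPosterior_eq_tilted, tilted_tilted hint]
  congr 1
  funext u
  rw [Pi.add_apply, recPhiSum_succ, neg_add]

theorem recFilter_succ (j : ℕ) :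
    recFilter μp S t Φt (j + 1) =
      ((recFilter μp S t Φt j).tilted fun u => -Φt (j + 1) u).map (S (t (j + 1) - t j)) :=
  rfl

theorem recFilter_eq_map_recPosterior [IsProbabilityMeasure μp] (hS : ∀ c, Measurable (S c))
    (ht0 : t 0 = 0) {j : ℕ} (hstep : ∀ k < j, S (t (k + 1) - t k) ∘ S (t k) = S (t (k + 1)))
    (hΦ : ∀ k < j, Measurable (Φt (k + 1)))
    (hint : ∀ k < j, Integrable (fun u => exp (-recPhiSum S t Φt k u)) μp) :
    recFilter μp S t Φt j = (recPosterior μp S t Φt j).map (S (t j)) := by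
  induction j with
  | zero => rw [recPosterior_zero, ht0]; rfl
  | succ j ih =>
    rw [recFilter_succ, ih (fun k hk => hstep k (by omega)) (fun k hk => hΦ k (by omega))
        (fun k hk => hint k (by omega)),
      Measure.tilted_map _ (hS _) (f := fun u => -Φt (j + 1) u) (hΦ j j.lt_succ_self).neg,
      ← recPosterior_succ S t Φt μp (hint j j.lt_succ_self),
      Measure.map_map (hS _) (hS _), hstep j j.lt_succ_self]

end Filtering

theorem recursive_filtering_eq_pushforward_posterior_general
    {X : Type*} [MeasurableSpace X]
    (S : ℝ → X → X) (hSmeas : Measurable fun p : ℝ × X => S p.1 p.2)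
    (hsemi : ∀ s ≥ (0 : ℝ), ∀ τ ≥ (0 : ℝ), ∀ u : X, S s (S τ u) = S (s + τ) u)
    (μp : Measure X) [IsProbabilityMeasure μp]
    (N : ℕ) (t : ℕ → ℝ) (ht0 : t 0 = 0) (htmono : ∀ j < N, t j < t (j + 1))
    (Φt : ℕ → X → ℝ)
    (hΦmeas : ∀ j, 1 ≤ j → j ≤ N → Measurable (Φt j))
    (hΦbdd : ∀ j, 1 ≤ j → j ≤ N → ∃ m : ℝ, ∀ u : X, m ≤ Φt j u) :
    ∀ j ≤ N,
      (Integrable (fun u => Real.exp (-recPhiSum S t Φt j u)) μp ∧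
        0 < recZ μp S t Φt j) ∧
      recFilter μp S t Φt j = (recPosterior μp S t Φt j).map (S (t j)) := by
  intro j hj
  have hS : ∀ c, Measurable (S c) := fun c => hSmeas.comp measurable_prodMk_left
  have hΦ : ∀ k < N, Measurable (Φt (k + 1)) := fun k hk => hΦmeas _ (by omega) (by omega)
  have hΦ_bdd : ∀ k < N, BddBelow (Set.range (Φt (k + 1))) := fun k hk =>
    let ⟨m, hm⟩ := hΦbdd _ (by omega) (by omega); ⟨m, Set.forall_mem_range.2 hm⟩
  have hint : ∀ k ≤ N, Integrable (fun u => exp (-recPhiSum S t Φt k u)) μp := fun k hk =>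
    integrable_exp_neg_of_bddBelow
      (measurable_recPhiSum S t Φt hS fun i hi => hΦ i (by omega)).aestronglyMeasurable
      (bddBelow_range_recPhiSum S t Φt fun i hi => hΦ_bdd i (by omega))
  have ht : StrictMonoOn t (Set.Iic N) := strictMonoOn_Iic_of_lt_succ (by simpa using htmono)
  have hstep : ∀ k < N, S (t (k + 1) - t k) ∘ S (t k) = S (t (k + 1)) := fun k hk =>
    comp_sub_eq_of_semigroup S hsemi
      (ht0 ▸ ht.monotoneOn (Set.mem_Iic.2 N.zero_le) (Set.mem_Iic.2 hk.le) k.zero_le)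
      (htmono k hk).le
  exact ⟨⟨hint j hj, integral_exp_pos (hint j hj)⟩,
    recFilter_eq_map_recPosterior S t Φt μp hS ht0 (fun k hk => hstep k (by omega))
      (fun k hk => hΦ k (by omega)) fun k hk => hint k (by omega)⟩

/-- **Proposition 3.3: the recursive prediction–correction filtering measures
agree with the push-forwards of the Bayesian posteriors,
`ν̃_j = (S_{t_j})_# μ^{(j)}`; moreover each normalization constant `Z_j` is
finite and strictly positive.** -/
theorem recursive_filtering_eq_pushforward_posterior
    {X : Type*} [NormedAddCommGroup X] [NormedSpace ℝ X] [CompleteSpace X]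
    [TopologicalSpace.SeparableSpace X] [MeasurableSpace X] [BorelSpace X]
    (S : ℝ → X → X) (hSmeas : Measurable fun p : ℝ × X => S p.1 p.2)
    (hsemi : ∀ s ≥ (0 : ℝ), ∀ τ ≥ (0 : ℝ), ∀ u : X, S s (S τ u) = S (s + τ) u)
    (μp : Measure X) [IsProbabilityMeasure μp]
    (N : ℕ) (t : ℕ → ℝ) (ht0 : t 0 = 0) (htmono : ∀ j < N, t j < t (j + 1))
    (Φt : ℕ → X → ℝ)
    (hΦmeas : ∀ j, 1 ≤ j → j ≤ N → Measurable (Φt j))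
    (hΦbdd : ∀ j, 1 ≤ j → j ≤ N → ∃ m : ℝ, ∀ u : X, m ≤ Φt j u) :
    ∀ j ≤ N,
      (Integrable (fun u => Real.exp (-recPhiSum S t Φt j u)) μp ∧
        0 < recZ μp S t Φt j) ∧
      recFilter μp S t Φt j = (recPosterior μp S t Φt j).map (S (t j)) :=
  recursive_filtering_eq_pushforward_posterior_general S hSmeas hsemi μp N t ht0 htmono Φt hΦmeas
    hΦbdd
end
end
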